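/- arXiv:1001.0466 — 7 statements merged into one kernel-verified Lean document; each statement's English description precedes it below -/
import Mathlib

section
/- Let f : A → B be a Kummer homomorphism of finitely generated commutative monoids (written additively). Then the induced homomorphism f^gp : A^gp → B^gp of Grothendieck groups is injective, and its cokernel B^gp / f^gp(A^gp) is a finite group. -/
/-!
Any group completion is isomorphic to `GrothendieckAddGroup`, so its elements are
differences `ι a - ι b`, and `ι a = ι b` exactly when `a + c = b + c` for some `c`.

Injectivity: if `f^gp (ι a - ι a') = 0` then `f a + c = f a' + c` in `B`; choosing `m > 0` with
`m • c = f d` gives `f (a + d) = f (a' + d)`, so `a + d = a' + d` and `ι a = ι a'`.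

Finiteness: some positive multiple of every `ι b` lies in the image of `f^gp`, so the cokernel is
a torsion group; it is finitely generated because `B` is, hence finite.
-/

open Function Algebra

universe u

namespace Algebra.GrothendieckAddGroup

variable {M : Type*} [AddCommMonoid M]

theorem exists_add_eq_add_of_of_eq {a b : M} (h : of a = of b) : ∃ c, a + c = b + c := by
  obtain ⟨c, hc⟩ := (AddLocalization.addMonoidOf ⊤).exists_of_eq h
  exact ⟨c, by rw [add_comm, hc, add_comm]⟩

theorem exists_of_sub_of (y : GrothendieckAddGroup M) : ∃ a b : M, of a - of b = y := by
  obtain ⟨⟨a, b⟩, h⟩ := (AddLocalization.addMonoidOf ⊤).surj y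
  exact ⟨a, b, sub_eq_of_eq_add h.symm⟩

end Algebra.GrothendieckAddGroup

section GroupCompletion

variable {M G : Type u} [AddCommMonoid M] [AddCommGroup G]

def IsGroupCompletion (ι : M →+ G) : Prop :=
  ∀ (H : Type u) [AddCommGroup H] (g : M →+ H), ∃! φ : G →+ H, φ.comp ι = g

namespace IsGroupCompletion

variable {ι : M →+ G} (h : IsGroupCompletion ι)
include h

theorem hom_ext {H : Type u} [AddCommGroup H] {φ ψ : G →+ H} (hφψ : φ.comp ι = ψ.comp ι) :
    φ = ψ :=
  (h H (ψ.comp ι)).unique hφψ rfl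

noncomputable def addEquivGrothendieck : G ≃+ GrothendieckAddGroup M :=
  let φ := (h _ GrothendieckAddGroup.of).choose
  have hφ : φ.comp ι = GrothendieckAddGroup.of := (h _ _).choose_spec.1
  AddMonoidHom.toAddEquiv φ (GrothendieckAddGroup.lift ι)
    (h.hom_ext <| by
      rw [AddMonoidHom.comp_assoc, hφ, ← GrothendieckAddGroup.lift_symm_apply,
        Equiv.symm_apply_apply, AddMonoidHom.id_comp])
    (GrothendieckAddGroup.lift.symm.injective <| by
      simp only [GrothendieckAddGroup.lift_symm_apply, AddMonoidHom.comp_assoc]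
      rw [← GrothendieckAddGroup.lift_symm_apply, Equiv.symm_apply_apply, hφ,
        AddMonoidHom.id_comp])

theorem addEquivGrothendieck_apply_of (a : M) :
    h.addEquivGrothendieck (ι a) = GrothendieckAddGroup.of a :=
  DFunLike.congr_fun (h _ GrothendieckAddGroup.of).choose_spec.1 a

theorem exists_add_eq_add_of_eq {a b : M} (hab : ι a = ι b) : ∃ c, a + c = b + c :=
  GrothendieckAddGroup.exists_add_eq_add_of_of_eq <| by
    rw [← h.addEquivGrothendieck_apply_of, ← h.addEquivGrothendieck_apply_of, hab]

theorem exists_sub_eq (x : G) : ∃ a b : M, ι a - ι b = x := by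
  obtain ⟨a, b, hab⟩ := GrothendieckAddGroup.exists_of_sub_of (h.addEquivGrothendieck x)
  refine ⟨a, b, h.addEquivGrothendieck.injective ?_⟩
  rw [map_sub, h.addEquivGrothendieck_apply_of, h.addEquivGrothendieck_apply_of, hab]

theorem addGroup_fg [AddMonoid.FG M] : AddGroup.FG G :=
  AddGroup.fg_iff_addMonoid_fg.mpr <|
    AddMonoid.fg_of_surjective h.addEquivGrothendieck.symm.toAddMonoidHom
      h.addEquivGrothendieck.symm.surjective

end IsGroupCompletion

end GroupCompletion

theorem add_nsmul_eq_add_nsmul_of_add_eq {M : Type*} [AddCommMonoid M] {a b c : M}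
    (h : a + c = b + c) {m : ℕ} (hm : 0 < m) : a + m • c = b + m • c := by
  obtain ⟨n, rfl⟩ := Nat.exists_eq_succ_of_ne_zero hm.ne'
  rw [succ_nsmul', ← add_assoc, ← add_assoc, h]

section Kummer

variable {A B Agp Bgp : Type u} [AddCommMonoid A] [AddCommMonoid B]
  [AddCommGroup Agp] [AddCommGroup Bgp] {f : A →+ B}
  (hkum : ∀ b : B, ∃ m : ℕ, 0 < m ∧ m • b ∈ Set.range f)
  {ιA : A →+ Agp} {ιB : B →+ Bgp} {fgp : Agp →+ Bgp} (hfgp : fgp.comp ιA = ιB.comp f)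
include hkum hfgp

theorem injective_gp_of_kummer (hfinj : Injective f)
    (hA : IsGroupCompletion ιA) (hB : IsGroupCompletion ιB) : Injective fgp := by
  have hfgp' (a : A) : fgp (ιA a) = ιB (f a) := DFunLike.congr_fun hfgp a
  rw [injective_iff_map_eq_zero]
  intro x hx
  obtain ⟨a, a', rfl⟩ := hA.exists_sub_eq x
  rw [map_sub, hfgp', hfgp', sub_eq_zero] at hx
  obtain ⟨c, hc⟩ := hB.exists_add_eq_add_of_eq hx
  obtain ⟨m, hm, d, hd⟩ := hkum c
  have had : a + d = a' + d :=
    hfinj <| by rw [map_add, map_add, hd, add_nsmul_eq_add_nsmul_of_add_eq hc hm]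
  rw [sub_eq_zero, ← add_left_inj (ιA d), ← map_add, ← map_add, had]

theorem isAddTorsion_cokernel_gp_of_kummer (hB : IsGroupCompletion ιB) :
    IsAddTorsion (Bgp ⧸ fgp.range) := by
  have hgen (b : B) : IsOfFinAddOrder (ιB b : Bgp ⧸ fgp.range) := by
    obtain ⟨m, hm, c, hc⟩ := hkum b
    refine isOfFinAddOrder_iff_nsmul_eq_zero.mpr ⟨m, hm, ?_⟩
    rw [← QuotientAddGroup.mk_nsmul, QuotientAddGroup.eq_zero_iff, ← map_nsmul, ← hc]
    exact ⟨ιA c, DFunLike.congr_fun hfgp c⟩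
  intro x
  obtain ⟨y, rfl⟩ := QuotientAddGroup.mk_surjective x
  obtain ⟨b, b', rfl⟩ := hB.exists_sub_eq y
  rw [QuotientAddGroup.mk_sub, sub_eq_add_neg]
  exact (hgen b).add (hgen b').neg

end Kummer

theorem kummer_gp_injective_finite_cokernel_general {A B Agp Bgp : Type u}
    [AddCommMonoid A] [AddCommMonoid B] [AddCommGroup Agp] [AddCommGroup Bgp]
    [AddMonoid.FG B]
    (f : A →+ B) (hfinj : Function.Injective f)
    (hkum : ∀ b : B, ∃ m : ℕ, 0 < m ∧ m • b ∈ Set.range f)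
    (ιA : A →+ Agp) (ιB : B →+ Bgp)
    (hAgp : ∀ (G : Type u) [AddCommGroup G] (g : A →+ G), ∃! φ : Agp →+ G, φ.comp ιA = g)
    (hBgp : ∀ (G : Type u) [AddCommGroup G] (g : B →+ G), ∃! φ : Bgp →+ G, φ.comp ιB = g)
    (fgp : Agp →+ Bgp) (hfgp : fgp.comp ιA = ιB.comp f) :
    Function.Injective fgp ∧ Finite (Bgp ⧸ fgp.range) := by
  have hB : IsGroupCompletion ιB := hBgp
  have := hB.addGroup_fg
  exact ⟨injective_gp_of_kummer hkum hfgp hfinj hAgp hB,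
    AddCommGroup.finite_of_fg_isAddTorsion _ (isAddTorsion_cokernel_gp_of_kummer hkum hfgp hB)⟩

/-- If `f : A → B` is a Kummer homomorphism of finitely generated
commutative monoids (written additively), then the induced homomorphism
`f^gp : A^gp → B^gp` of Grothendieck groups (characterized here by their universal
property) is injective and its cokernel `B^gp / f^gp(A^gp)` is a finite group. -/
theorem kummer_gp_injective_finite_cokernel {A B Agp Bgp : Type u}
    [AddCommMonoid A] [AddCommMonoid B] [AddCommGroup Agp] [AddCommGroup Bgp]
    [AddMonoid.FG A] [AddMonoid.FG B]
    (f : A →+ B) (hfinj : Function.Injective f)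
    (hkum : ∀ b : B, ∃ m : ℕ, 0 < m ∧ m • b ∈ Set.range f)
    (ιA : A →+ Agp) (ιB : B →+ Bgp)
    (hAgp : ∀ (G : Type u) [AddCommGroup G] (g : A →+ G), ∃! φ : Agp →+ G, φ.comp ιA = g)
    (hBgp : ∀ (G : Type u) [AddCommGroup G] (g : B →+ G), ∃! φ : Bgp →+ G, φ.comp ιB = g)
    (fgp : Agp →+ Bgp) (hfgp : fgp.comp ιA = ιB.comp f) :
    Function.Injective fgp ∧ Finite (Bgp ⧸ fgp.range) :=
  kummer_gp_injective_finite_cokernel_general f hfinj hkum ιA ιB hAgp hBgp fgp hfgp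
end

section
/- Let A be a commutative monoid (written additively) and S ⊆ A a submonoid. Then S is a kernel, i.e., S = f⁻¹(0) for some monoid homomorphism f out of A, if and only if for all a ∈ A and s ∈ S with a + s ∈ S, one has a ∈ S. -/
/-- Auxiliary congruence: identify `a` and `b` iff they differ by elements of `S`. -/
def kernelCon {A : Type u} [AddCommMonoid A] (S : AddSubmonoid A) : AddCon A where
  r a b := ∃ s ∈ S, ∃ t ∈ S, a + s = b + t
  iseqv := by
    constructor
    · exact fun a => ⟨0, S.zero_mem, 0, S.zero_mem, rfl⟩
    · rintro a b ⟨s, hs, t, ht, h⟩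
      exact ⟨t, ht, s, hs, h.symm⟩
    · rintro a b c ⟨s, hs, t, ht, h1⟩ ⟨u, hu, v, hv, h2⟩
      refine ⟨s + u, S.add_mem hs hu, t + v, S.add_mem ht hv, ?_⟩
      calc a + (s + u) = (a + s) + u := by abel
        _ = (b + t) + u := by rw [h1]
        _ = (b + u) + t := by abel
        _ = (c + v) + t := by rw [h2]
        _ = c + (t + v) := by abel
  add' := by
    rintro w x y z ⟨s, hs, t, ht, h1⟩ ⟨u, hu, v, hv, h2⟩
    refine ⟨s + u, S.add_mem hs hu, t + v, S.add_mem ht hv, ?_⟩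
    calc w + y + (s + u) = (w + s) + (y + u) := by abel
      _ = (x + t) + (z + v) := by rw [h1, h2]
      _ = x + z + (t + v) := by abel

/-- A submonoid `S` of a commutative monoid `A` (written additively)
is a kernel, i.e. `S = f⁻¹(0)` for some monoid homomorphism `f` out of `A`, if and
only if for all `a ∈ A` and `s ∈ S` with `a + s ∈ S` one has `a ∈ S`. -/
theorem isKernel_iff {A : Type u} [AddCommMonoid A] (S : AddSubmonoid A) :
    (∃ (B : Type u) (_ : AddCommMonoid B) (f : A →+ B), ∀ a : A, a ∈ S ↔ f a = 0) ↔
      ∀ a s : A, s ∈ S → a + s ∈ S → a ∈ S := by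
  constructor
  · rintro ⟨B, _, f, hf⟩ a s hs has
    rw [hf] at hs has ⊢
    simpa [map_add, hs] using has
  · intro hS
    refine ⟨(kernelCon S).Quotient, inferInstance, (kernelCon S).mk', fun a => ?_⟩
    refine Iff.trans ?_ ((kernelCon S).eq (a := a) (b := 0)).symm
    constructor
    · intro ha
      exact ⟨0, S.zero_mem, a, ha, by abel⟩
    · rintro ⟨s, hs, t, ht, h⟩
      rw [zero_add] at h
      exact hS a s hs (h ▸ ht)
end

section
/- Let A be a commutative monoid (written additively) and S ⊆ A a submonoid. The additive congruence on A generated by the set of pairs {(s, 0) : s ∈ S} relates two elements a, b ∈ A if and only if there exist s ∈ S and t ∈ S with a + s = b + t. -/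
/-- For a submonoid `S` of a commutative monoid `A` (written
additively), the additive congruence on `A` generated by the pairs `(s, 0)` for
`s ∈ S` relates `a` and `b` if and only if there are `s, t ∈ S` with `a + s = b + t`. -/
theorem addConGen_submonoid_rel_iff {A : Type u} [AddCommMonoid A] (S : AddSubmonoid A)
    (a b : A) :
    addConGen (fun x y : A => x ∈ S ∧ y = 0) a b ↔ ∃ s ∈ S, ∃ t ∈ S, a + s = b + t := by
  constructor
  · intro h
    induction h with
    | of x y hxy =>
      exact ⟨0, S.zero_mem, x, hxy.1, by simp [hxy.2, add_comm]⟩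
    | refl x => exact ⟨0, S.zero_mem, 0, S.zero_mem, rfl⟩
    | symm _ ih =>
      obtain ⟨s, hs, t, ht, h⟩ := ih
      exact ⟨t, ht, s, hs, h.symm⟩
    | trans _ _ ih₁ ih₂ =>
      obtain ⟨s, hs, t, ht, h₁⟩ := ih₁
      obtain ⟨u, hu, v, hv, h₂⟩ := ih₂
      refine ⟨s + u, S.add_mem hs hu, t + v, S.add_mem ht hv, ?_⟩
      rw [← add_assoc, h₁, add_right_comm, h₂, add_right_comm, add_assoc]
    | add _ _ ih₁ ih₂ =>
      obtain ⟨s, hs, t, ht, h₁⟩ := ih₁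
      obtain ⟨u, hu, v, hv, h₂⟩ := ih₂
      refine ⟨s + u, S.add_mem hs hu, t + v, S.add_mem ht hv, ?_⟩
      rw [add_add_add_comm, h₁, h₂, add_add_add_comm]
  · rintro ⟨s, hs, t, ht, h⟩
    have hsc : addConGen (fun x y : A => x ∈ S ∧ y = 0) (a + s) a := by
      have := (addConGen _).add ((addConGen (fun x y : A => x ∈ S ∧ y = 0)).refl a)
        (AddConGen.Rel.of s 0 ⟨hs, rfl⟩)
      simpa using this
    have htc : addConGen (fun x y : A => x ∈ S ∧ y = 0) (b + t) b := by
      have := (addConGen _).add ((addConGen (fun x y : A => x ∈ S ∧ y = 0)).refl b)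
        (AddConGen.Rel.of t 0 ⟨ht, rfl⟩)
      simpa using this
    exact (addConGen _).trans ((addConGen _).trans ((addConGen _).symm hsc) (h ▸ (addConGen _).refl _)) htc
end

section
/- Let A be a commutative monoid (written additively), S ⊆ A a submonoid, and π : A → A/S the projection onto the quotient. Then the kernel π⁻¹(0) of π equals K := {a ∈ A : a + s ∈ S for some s ∈ S}. Moreover K is the smallest kernel containing S: S ⊆ K, and for every monoid homomorphism g : A → C with S ⊆ g⁻¹(0), one has K ⊆ g⁻¹(0). -/
/-!
Two elements of `A` become equal in `A/S` exactly when they become equal after adding elements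
of `S`: the relation `a + s = b + t` with `s, t ∈ S` is already a congruence, it identifies each
`s ∈ S` with `0`, and conversely `a ~ a + s = b + t ~ b` in any congruence killing `S`. Taking
`b = 0` describes the kernel. A homomorphism vanishing on `S` vanishes on `a` as soon as it
vanishes on `a + s` and on `s`.
-/

namespace AddSubmonoid

variable {A : Type*} [AddCommMonoid A] (S : AddSubmonoid A)

def modCon : AddCon A where
  r a b := ∃ s ∈ S, ∃ t ∈ S, a + s = b + t
  iseqv :=
    { refl := fun _ => ⟨0, S.zero_mem, 0, S.zero_mem, rfl⟩
      symm := fun ⟨s, hs, t, ht, h⟩ => ⟨t, ht, s, hs, h.symm⟩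
      trans := by
        rintro a b c ⟨s, hs, t, ht, hab⟩ ⟨u, hu, v, hv, hbc⟩
        refine ⟨s + u, S.add_mem hs hu, v + t, S.add_mem hv ht, ?_⟩
        calc a + (s + u) = b + u + t := by rw [← add_assoc, hab, add_right_comm]
          _ = c + (v + t) := by rw [hbc, add_assoc] }
  add' := by
    rintro a b a' b' ⟨s, hs, t, ht, h⟩ ⟨u, hu, v, hv, h'⟩
    refine ⟨s + u, S.add_mem hs hu, t + v, S.add_mem ht hv, ?_⟩
    calc a + a' + (s + u) = (a + s) + (a' + u) := by abel
      _ = b + b' + (t + v) := by rw [h, h']; abel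

theorem addConGen_eq_modCon : addConGen (fun x y : A => x ∈ S ∧ y = 0) = S.modCon := by
  refine le_antisymm (AddCon.addConGen_le.mpr ?_) ?_
  · rintro x _ ⟨hx, rfl⟩
    exact ⟨0, S.zero_mem, x, hx, by simp⟩
  · rintro a b ⟨s, hs, t, ht, h⟩
    set c := addConGen (fun x y : A => x ∈ S ∧ y = 0)
    have kill {x : A} (hx : x ∈ S) : c x 0 := AddConGen.Rel.of _ _ ⟨hx, rfl⟩
    have ha : c a (a + s) := by simpa using c.add (c.refl a) (c.symm (kill hs))
    have hb : c (b + t) b := by simpa using c.add (c.refl b) (kill ht)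
    exact c.trans ha (h ▸ hb)

theorem modCon_zero_iff {a : A} : S.modCon a 0 ↔ ∃ s ∈ S, a + s ∈ S := by
  constructor
  · rintro ⟨s, hs, t, ht, h⟩
    exact ⟨s, hs, by rwa [h, zero_add]⟩
  · rintro ⟨s, hs, has⟩
    exact ⟨s, hs, a + s, has, (zero_add _).symm⟩

end AddSubmonoid

theorem AddMonoidHom.map_eq_zero_of_map_add_eq_zero {A C : Type*} [AddMonoid A]
    [AddMonoid C] (g : A →+ C) {a s : A} (hs : g s = 0) (has : g (a + s) = 0) : g a = 0 := by
  rwa [map_add, hs, add_zero] at has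

/-- Let `S` be a submonoid of a commutative monoid `A` (written
additively) and `π : A → A/S` the projection onto the quotient of `A` by the
congruence generated by the pairs `(s, 0)` for `s ∈ S`.  Then the kernel `π⁻¹(0)`
equals `K = {a : ∃ s ∈ S, a + s ∈ S}`, and `K` is the smallest kernel containing `S`:
`S ⊆ K` and every monoid homomorphism `g` out of `A` vanishing on `S` vanishes on `K`. -/
theorem kernel_of_quotient_projection {A : Type u} [AddCommMonoid A] (S : AddSubmonoid A)
    (K : Set A) (hK : K = {a : A | ∃ s ∈ S, a + s ∈ S}) :
    (∀ a : A, (addConGen (fun x y : A => x ∈ S ∧ y = 0)).mk' a = 0 ↔ a ∈ K) ∧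
    (S : Set A) ⊆ K ∧
    (∀ (C : Type u) [AddCommMonoid C] (g : A →+ C),
      (∀ s ∈ S, g s = 0) → ∀ a ∈ K, g a = 0) := by
  subst hK
  refine ⟨fun a => ?_, fun a ha => ⟨0, S.zero_mem, by simpa using ha⟩, ?_⟩
  · rw [← map_zero (addConGen _).mk', ← AddCon.ker_rel, AddCon.mk'_ker,
      S.addConGen_eq_modCon, S.modCon_zero_iff, Set.mem_ofPred_eq]
  · rintro C _ g hg a ⟨s, hs, has⟩
    exact g.map_eq_zero_of_map_add_eq_zero (hg s hs) (hg _ has)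
end

section
/- Let P be a finitely generated commutative monoid (written additively) and S ⊆ P a submonoid. Then there exist finitely many elements s₁, …, s_r ∈ S such that the additive congruence on P generated by {(s, 0) : s ∈ S} equals the additive congruence generated by {(s₁, 0), …, (s_r, 0)}. Equivalently, every cokernel P → Q (i.e., every quotient of P by a submonoid) is the cokernel of a homomorphism ℕ^r → P from a finitely generated free commutative monoid. -/
/-!
The congruence generated by the pairs `(s, 0)`, `s ∈ T`, identifies `a` with `0` as soon as
`a + v = u` for some `u, v` in the submonoid generated by `T`; so it suffices to find a finite
`T ⊆ S` for which every element of `S` satisfies such a relation. Choose a surjection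
`ℕⁿ → P` and let `S'` be the preimage of `S`. In `ℤⁿ` the subgroup generated by `S'` is finitely
generated, hence generated by a finite `T ⊆ S'`, so every `a ∈ S'` is `u - v` there; as `ℕⁿ` is
cancellative this is `a + v = u` in `ℕⁿ`, and the relation survives the push-forward to `P`.
-/

open Function

section DiffClosure

variable {M N : Type*} [AddCommMonoid M] [AddCommMonoid N]

def diffClosure (T : Set M) : Set M :=
  {a | ∃ u ∈ AddSubmonoid.closure T, ∃ v ∈ AddSubmonoid.closure T, a + v = u}

theorem AddSubgroup.closure_subset_diffClosure {G : Type*} [AddCommGroup G] (T : Set G) :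
    (AddSubgroup.closure T : Set G) ⊆ diffClosure T := by
  intro x hx
  induction hx using AddSubgroup.closure_induction with
  | mem x hx => exact ⟨x, AddSubmonoid.subset_closure hx, 0, zero_mem _, add_zero x⟩
  | zero => exact ⟨0, zero_mem _, 0, zero_mem _, add_zero 0⟩
  | add x y _ _ hx hy =>
    obtain ⟨u, hu, v, hv, rfl⟩ := hx
    obtain ⟨u', hu', v', hv', rfl⟩ := hy
    exact ⟨_, add_mem hu hu', v + v', add_mem hv hv', by abel⟩
  | neg x _ hx =>
    obtain ⟨u, hu, v, hv, rfl⟩ := hx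
    exact ⟨v, hv, x + v, hu, by abel⟩

theorem image_diffClosure_subset {F : Type*} [FunLike F M N] [AddMonoidHomClass F M N] (φ : F)
    (T : Set M) : φ '' diffClosure T ⊆ diffClosure (φ '' T) := by
  rintro _ ⟨a, ⟨_, hu, v, hv, rfl⟩, rfl⟩
  simp only [diffClosure, ← AddMonoidHom.map_mclosure]
  exact ⟨_, AddSubmonoid.mem_map_of_mem φ hu, φ v, AddSubmonoid.mem_map_of_mem φ hv,
    (map_add φ a v).symm⟩

theorem preimage_diffClosure_image_subset {φ : M →+ N} (hφ : Injective φ) (T : Set M) :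
    φ ⁻¹' diffClosure (φ '' T) ⊆ diffClosure T := by
  rintro a ⟨_, hu, _, hv, huv⟩
  rw [← AddMonoidHom.map_mclosure] at hu hv
  obtain ⟨u, hu, rfl⟩ := hu
  obtain ⟨v, hv, rfl⟩ := hv
  exact ⟨u, hu, v, hv, hφ (by rw [map_add, huv])⟩

theorem AddCon.rel_zero_of_mem_closure (c : AddCon M) {T : Set M} (hT : ∀ x ∈ T, c x 0) {x : M}
    (hx : x ∈ AddSubmonoid.closure T) : c x 0 := by
  have : AddSubmonoid.closure T ≤ AddMonoidHom.mker c.mk' :=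
    AddSubmonoid.closure_le.2 fun y hy => c.eq.2 (hT y hy)
  exact c.eq.1 (this hx)

theorem addConGen_rel_zero_eq_of_subset_diffClosure {S T : Set M} (hTS : T ⊆ S)
    (hST : S ⊆ diffClosure T) :
    addConGen (fun x y : M => x ∈ S ∧ y = 0) = addConGen (fun x y : M => x ∈ T ∧ y = 0) := by
  set c := addConGen (fun x y : M => x ∈ T ∧ y = 0)
  have hT : ∀ x ∈ AddSubmonoid.closure T, c x 0 :=
    fun x => c.rel_zero_of_mem_closure fun y hy => AddConGen.Rel.of _ _ ⟨hy, rfl⟩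
  refine le_antisymm (AddCon.addConGen_le.2 ?_) (AddCon.addConGen_mono fun x y h => ⟨hTS h.1, h.2⟩)
  rintro a _ ⟨ha, rfl⟩
  obtain ⟨_, hu, v, hv, rfl⟩ := hST ha
  have hav : c (a + v) a := by simpa using c.add (c.refl a) (hT v hv)
  exact hav.symm.trans (hT _ hu)

theorem exists_finite_subset_diffClosure_of_injective {G : Type*} [AddCommGroup G]
    [IsNoetherian ℤ G] {ι : M →+ G} (hι : Injective ι) (S : Set M) :
    ∃ T : Set M, T.Finite ∧ T ⊆ S ∧ S ⊆ diffClosure T := by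
  classical
  obtain ⟨T', hT'S, hspan⟩ :=
    (Submodule.fg_span_iff_fg_span_finset_subset (ι '' S)).1 (IsNoetherian.noetherian (R := ℤ) _)
  obtain ⟨T, hTS, rfl⟩ := Finset.subset_set_image_iff.1 hT'S
  refine ⟨T, T.finite_toSet, hTS, fun a ha => preimage_diffClosure_image_subset hι T ?_⟩
  have : ι a ∈ Submodule.span ℤ (ι '' T) := by
    rw [← Finset.coe_image, ← hspan]
    exact Submodule.subset_span ⟨a, ha, rfl⟩
  rw [← AddSubgroup.toIntSubmodule_closure] at this
  exact AddSubgroup.closure_subset_diffClosure _ this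

end DiffClosure

/-- If `P` is a finitely generated commutative monoid (written
additively) and `S ⊆ P` is a submonoid, then there are finitely many elements
`s 0, …, s (r-1) ∈ S` such that the additive congruence generated by the pairs
`(s, 0)` for `s ∈ S` equals the additive congruence generated by the pairs
`(s i, 0)`.  (Equivalently, every cokernel `P → Q` is the cokernel of a
homomorphism `ℕ^r → P` from a finitely generated free commutative monoid.) -/
theorem addConGen_submonoid_eq_finitely_generated {P : Type u} [AddCommMonoid P]
    [AddMonoid.FG P] (S : AddSubmonoid P) :
    ∃ (r : ℕ) (s : Fin r → P), (∀ i, s i ∈ S) ∧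
      addConGen (fun x y : P => x ∈ S ∧ y = 0) =
        addConGen (fun x y : P => (∃ i, x = s i) ∧ y = 0) := by
  obtain ⟨n, f, hf⟩ := Module.Finite.exists_fin' ℕ P
  obtain ⟨φ, hφ⟩ : ∃ φ : (Fin n → ℕ) →+ P, Surjective φ := ⟨f, hf⟩
  have hcast : Injective ((Nat.castAddMonoidHom ℤ).compLeft (Fin n)) :=
    fun _ _ h => funext fun i => Nat.cast_injective (congrFun h i)
  obtain ⟨T, hT, hTS, hST⟩ := exists_finite_subset_diffClosure_of_injective hcast (φ ⁻¹' S)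
  have hS : (S : Set P) ⊆ diffClosure (φ '' T) := fun p hp => by
    obtain ⟨a, rfl⟩ := hφ p
    exact image_diffClosure_subset φ T (Set.mem_image_of_mem φ (hST hp))
  obtain ⟨r, s, hs⟩ := (hT.image φ).fin_embedding
  have hrange : ∀ x, (∃ i, x = s i) ↔ x ∈ φ '' T := by simp [← hs, eq_comm]
  refine ⟨r, s, fun i => Set.image_subset_iff.2 hTS ((hrange (s i)).1 ⟨i, rfl⟩), ?_⟩
  simp only [hrange]
  exact addConGen_rel_zero_eq_of_subset_diffClosure (Set.image_subset_iff.2 hTS) hS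
end

section
/- Let M be a commutative monoid (written additively) and let G ⊆ M be the submonoid consisting of all invertible elements of M. Assume that the translation action of G on M is free, i.e., for g ∈ G and m ∈ M, g + m = m implies g = 0, and assume that the quotient monoid M/G is finitely generated. Then there exists a finitely generated submonoid P ⊆ M such that the composite P ↪ M → M/G is surjective and induces an isomorphism P/(P ∩ G) ≅ M/G. -/
/-!
Lift finitely many generators of `M/G` to `w : ι → M` and write `f a = ∑ i, a i • w i` for
`a : ι → ℕ`. The pairs `(a, b)` with `f a + u = f b` for some unit `u` form a submonoid `S` of
`ℕ^ι × ℕ^ι`; since `ℤ^ι × ℤ^ι` is noetherian, there is a finite `F ⊆ S` such that every `p ∈ S`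
satisfies `p + A = B` with `A, B` in the monoid generated by `F`. Freeness makes `u` unique and
additive in `(a, b)`, so every such `u` lies in the group `U` generated by the units attached to
`F`. The chart is `P = ⟨w⟩ + U`: if `x, y ∈ P` agree in `M/G`, the unit relating them is
absorbed by `U`, so they already agree in `P/(P ∩ G)`.
-/

universe u

open Function Set

section Lattice

variable {A : Type*} [AddCommGroup A]

theorem AddSubgroup.mem_closure_iff_exists_sub {s : Set A} {x : A} :
    x ∈ AddSubgroup.closure s ↔
      ∃ a ∈ AddSubmonoid.closure s, ∃ b ∈ AddSubmonoid.closure s, b - a = x := by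
  refine ⟨fun hx => ?_, ?_⟩
  · induction hx using AddSubgroup.closure_induction with
    | mem x hx => exact ⟨0, zero_mem _, x, AddSubmonoid.subset_closure hx, sub_zero x⟩
    | zero => exact ⟨0, zero_mem _, 0, zero_mem _, sub_zero 0⟩
    | add x y _ _ hx hy =>
      obtain ⟨a, ha, b, hb, rfl⟩ := hx
      obtain ⟨a', ha', b', hb', rfl⟩ := hy
      exact ⟨a + a', add_mem ha ha', b + b', add_mem hb hb', by abel⟩
    | neg x _ hx =>
      obtain ⟨a, ha, b, hb, rfl⟩ := hx
      exact ⟨b, hb, a, ha, (neg_sub b a).symm⟩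
  · rintro ⟨a, ha, b, hb, rfl⟩
    have hle : AddSubmonoid.closure s ≤ (AddSubgroup.closure s).toAddSubmonoid :=
      AddSubmonoid.closure_le.mpr AddSubgroup.subset_closure
    exact sub_mem (hle hb) (hle ha)

theorem exists_finite_subset_forall_add_mem_closure [IsNoetherian ℤ A] (S : Set A) :
    ∃ F ⊆ S, F.Finite ∧ ∀ s ∈ S, ∃ a ∈ AddSubmonoid.closure F, s + a ∈ AddSubmonoid.closure F := by
  obtain ⟨F, hFS, hspan⟩ := (Submodule.fg_span_iff_fg_span_finset_subset (R := ℤ) S).mp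
    (IsNoetherian.noetherian _)
  refine ⟨F, hFS, F.finite_toSet, fun s hs => ?_⟩
  have hsF : s ∈ AddSubgroup.closure (F : Set A) := by
    rw [← Submodule.span_int_eq_addSubgroupClosure, ← hspan]
    exact Submodule.subset_span hs
  obtain ⟨a, ha, b, hb, rfl⟩ := AddSubgroup.mem_closure_iff_exists_sub.mp hsF
  exact ⟨a, ha, by rwa [sub_add_cancel]⟩

end Lattice

theorem exists_finite_subset_forall_add_mem_closure_of_injective {N A : Type*}
    [AddCommMonoid N] [AddCommGroup A] [IsNoetherian ℤ A] {e : N →+ A} (he : Injective e)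
    (S : Set N) :
    ∃ F ⊆ S, F.Finite ∧ ∀ s ∈ S, ∃ a ∈ AddSubmonoid.closure F, s + a ∈ AddSubmonoid.closure F := by
  obtain ⟨F, hFS, hFfin, hF⟩ := exists_finite_subset_forall_add_mem_closure (e '' S)
  have hF_image : e '' (e ⁻¹' F) = F :=
    image_preimage_eq_of_subset (hFS.trans (image_subset_range e S))
  refine ⟨e ⁻¹' F, fun s hs => ?_, hFfin.preimage he.injOn, fun s hs => ?_⟩
  · obtain ⟨t, ht, hts⟩ := hFS hs
    exact he hts ▸ ht
  · have hclosure := AddMonoidHom.map_mclosure e (e ⁻¹' F)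
    rw [hF_image] at hclosure
    obtain ⟨a', ha', hsa'⟩ := hF (e s) (mem_image_of_mem e hs)
    rw [← hclosure] at ha' hsa'
    obtain ⟨a, ha, rfl⟩ := ha'
    obtain ⟨b, hb, hab⟩ := hsa'
    rw [← map_add] at hab
    exact ⟨a, ha, he hab ▸ hb⟩


namespace AddSubmonoid

variable {M : Type*} [AddCommMonoid M]

abbrev quotientCon (K : AddSubmonoid M) : AddCon M :=
  addConGen fun x y => x ∈ K ∧ y = 0

theorem quotientCon_iff {K : AddSubmonoid M} {x y : M} :
    K.quotientCon x y ↔ ∃ k ∈ K, ∃ k' ∈ K, x + k = y + k' := by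
  refine ⟨fun h => ?_, ?_⟩
  · induction h with
    | of x y h =>
      obtain ⟨hx, rfl⟩ := h
      exact ⟨0, zero_mem K, x, hx, by rw [add_zero, zero_add]⟩
    | refl x => exact ⟨0, zero_mem K, 0, zero_mem K, rfl⟩
    | symm _ h =>
      obtain ⟨k, hk, k', hk', h⟩ := h
      exact ⟨k', hk', k, hk, h.symm⟩
    | trans _ _ h₁ h₂ =>
      obtain ⟨k₁, hk₁, k₁', hk₁', h₁⟩ := h₁
      obtain ⟨k₂, hk₂, k₂', hk₂', h₂⟩ := h₂
      refine ⟨k₁ + k₂, add_mem hk₁ hk₂, k₂' + k₁', add_mem hk₂' hk₁', ?_⟩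
      rw [← add_assoc, h₁, add_right_comm, h₂, add_assoc]
    | add _ _ h₁ h₂ =>
      obtain ⟨k₁, hk₁, k₁', hk₁', h₁⟩ := h₁
      obtain ⟨k₂, hk₂, k₂', hk₂', h₂⟩ := h₂
      refine ⟨k₁ + k₂, add_mem hk₁ hk₂, k₁' + k₂', add_mem hk₁' hk₂', ?_⟩
      rw [add_add_add_comm, h₁, h₂, add_add_add_comm]
  · rintro ⟨k, hk, k', hk', h⟩
    have hrel : ∀ {z}, z ∈ K → ∀ x, K.quotientCon (x + z) x := fun hz x => by
      simpa using K.quotientCon.add (K.quotientCon.refl x) (AddConGen.Rel.of _ _ ⟨hz, rfl⟩)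
    exact (K.quotientCon.symm (hrel hk x)).trans (h ▸ hrel hk' y)

theorem quotientCon_iff_of_forall_isAddUnit {K : AddSubmonoid M} (hK : ∀ m, m ∈ K ↔ IsAddUnit m)
    {x y : M} : K.quotientCon x y ↔ ∃ u : AddUnits M, x + u = y := by
  rw [quotientCon_iff]
  constructor
  · rintro ⟨k, hk, k', hk', h⟩
    obtain ⟨u, rfl⟩ := (hK k).mp hk
    obtain ⟨u', rfl⟩ := (hK k').mp hk'
    refine ⟨u - u', ?_⟩
    rw [sub_eq_add_neg, AddUnits.val_add, ← add_assoc, h, add_assoc, ← AddUnits.val_add,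
      add_neg_cancel, AddUnits.val_zero, add_zero]
  · rintro ⟨u, rfl⟩
    exact ⟨u, (hK u).mpr u.isAddUnit, 0, zero_mem K, (add_zero _).symm⟩

theorem exists_bijective_quotientCon_lift (K P : AddSubmonoid M)
    (hsurj : Surjective (K.quotientCon.mk'.comp P.subtype))
    (hrel : ∀ x ∈ P, ∀ y ∈ P, K.quotientCon x y → ∃ k ∈ K ⊓ P, ∃ k' ∈ K ⊓ P, x + k = y + k') :
    ∃ h : (K.comap P.subtype).quotientCon ≤ AddCon.ker (K.quotientCon.mk'.comp P.subtype),
      Bijective ((K.comap P.subtype).quotientCon.lift (K.quotientCon.mk'.comp P.subtype) h) := by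
  have hle : (K.comap P.subtype).quotientCon ≤ AddCon.ker (K.quotientCon.mk'.comp P.subtype) := by
    refine AddCon.addConGen_le.mpr ?_
    rintro x _ ⟨hx, rfl⟩
    exact (AddCon.eq _).mpr (AddConGen.Rel.of _ _ ⟨hx, rfl⟩)
  refine ⟨hle, fun x y hxy => ?_, AddCon.lift_surjective_of_surjective hle hsurj⟩
  induction x using AddCon.induction_on with | _ x => ?_
  induction y using AddCon.induction_on with | _ y => ?_
  obtain ⟨k, ⟨hkK, hkP⟩, k', ⟨hk'K, hk'P⟩, h⟩ :=
    hrel x x.2 y y.2 ((AddCon.eq _).mp hxy)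
  exact (AddCon.eq _).mpr <| quotientCon_iff.mpr
    ⟨⟨k, hkP⟩, hkK, ⟨k', hk'P⟩, hk'K, Subtype.ext h⟩

end AddSubmonoid

section FreeAction

variable {M : Type*} [AddCommMonoid M]

theorem AddUnits.eq_of_add_eq_add_of_free
    (hfree : ∀ u : AddUnits M, ∀ m : M, (u : M) + m = m → u = 0)
    {x : M} {u v : AddUnits M} (h : x + u = x + v) : u = v := by
  have hfix : ((u - v : AddUnits M) : M) + (x + v) = x + v := by
    rw [add_left_comm, ← AddUnits.val_add, sub_add_cancel, h]
  exact sub_eq_zero.mp (hfree _ _ hfix)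

def AddMonoidHom.unitDiffSubmonoid {N : Type*} [AddCommMonoid N] (f : N →+ M)
    (K : AddSubmonoid (AddUnits M)) : AddSubmonoid (N × N) where
  carrier := {p | ∃ u ∈ K, f p.1 + u = f p.2}
  add_mem' := by
    rintro p q ⟨u, hu, hp⟩ ⟨v, hv, hq⟩
    exact ⟨u + v, add_mem hu hv, by
      rw [Prod.fst_add, Prod.snd_add, map_add, map_add, AddUnits.val_add, add_add_add_comm, hp, hq]⟩
  zero_mem' := ⟨0, zero_mem K, by simp⟩

theorem exists_fg_addSubgroup_mem_of_sum_add_eq_sum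
    (hfree : ∀ u : AddUnits M, ∀ m : M, (u : M) + m = m → u = 0) {ι : Type*} [Fintype ι]
    (w : ι → M) :
    ∃ U : AddSubgroup (AddUnits M), U.FG ∧
      ∀ (a b : ι → ℕ) (u : AddUnits M), ∑ i, a i • w i + u = ∑ i, b i • w i → u ∈ U := by
  let f : (ι → ℕ) →+ M := (Fintype.linearCombination ℕ w).toAddMonoidHom
  let e : (ι → ℕ) →+ (ι → ℤ) := (Nat.castAddMonoidHom ℤ).compLeft ι
  have he : Injective (e.prodMap e) :=
    have he : Injective e := fun a b h => funext fun i => Nat.cast_injective (congrFun h i)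
    he.prodMap he
  obtain ⟨F, hFS, hFfin, hF⟩ :=
    exists_finite_subset_forall_add_mem_closure_of_injective he (f.unitDiffSubmonoid ⊤ : Set _)
  have := hFfin.to_subtype
  choose v _ hv using fun p : F => hFS p.2
  let U := AddSubgroup.closure (range v)
  refine ⟨U, (AddSubgroup.fg_iff U).mpr ⟨_, rfl, finite_range v⟩, fun a b u hu => ?_⟩
  have hclosure : AddSubmonoid.closure F ≤ f.unitDiffSubmonoid U.toAddSubmonoid :=
    AddSubmonoid.closure_le.mpr fun p hp =>
      ⟨v ⟨p, hp⟩, AddSubgroup.subset_closure (mem_range_self _), hv ⟨p, hp⟩⟩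
  obtain ⟨A, hA, hB⟩ := hF (a, b) ⟨u, trivial, hu⟩
  obtain ⟨uA, huA, hA⟩ := hclosure hA
  obtain ⟨uB, huB, hB⟩ := hclosure hB
  have hu : f a + u = f b := hu
  have hsum : u + uA = uB := AddUnits.eq_of_add_eq_add_of_free hfree (x := f (a + A.1)) <| by
    calc f (a + A.1) + ↑(u + uA) = (f a + u) + (f A.1 + uA) := by
          rw [map_add, AddUnits.val_add, add_add_add_comm]
      _ = f (b + A.2) := by rw [hu, hA, map_add]
      _ = f (a + A.1) + uB := hB.symm
  rw [eq_sub_iff_add_eq.mpr hsum]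
  exact sub_mem huB huA

end FreeAction

theorem exists_add_eq_add_of_mem_closure_range_sup {M : Type*} [AddCommMonoid M] {ι : Type*}
    [Fintype ι] {w : ι → M} {U : AddSubgroup (AddUnits M)}
    (hU : ∀ (a b : ι → ℕ) (u : AddUnits M), ∑ i, a i • w i + u = ∑ i, b i • w i → u ∈ U)
    {x y : M} (hx : x ∈ AddSubmonoid.closure (range w) ⊔ U.toAddSubmonoid.map (AddUnits.coeHom M))
    (hy : y ∈ AddSubmonoid.closure (range w) ⊔ U.toAddSubmonoid.map (AddUnits.coeHom M))
    {u : AddUnits M} (hxy : x + u = y) : ∃ v ∈ U, ∃ v' ∈ U, x + v = y + v' := by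
  obtain ⟨_, ha, _, ⟨v₁, hv₁, rfl⟩, rfl⟩ := AddSubmonoid.mem_sup.mp hx
  obtain ⟨_, hb, _, ⟨v₂, hv₂, rfl⟩, rfl⟩ := AddSubmonoid.mem_sup.mp hy
  obtain ⟨a, rfl⟩ := AddSubmonoid.mem_closure_range_iff_of_fintype.mp ha
  obtain ⟨b, rfl⟩ := AddSubmonoid.mem_closure_range_iff_of_fintype.mp hb
  have hdiff : v₁ + u - v₂ ∈ U := hU a b _ <| (AddUnits.add_left_inj v₂).mp <| by
    rw [add_assoc, ← AddUnits.val_add, sub_add_cancel, AddUnits.val_add, ← add_assoc]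
    exact hxy
  refine ⟨v₁ + u, by simpa using add_mem hdiff hv₂, v₁, hv₁, ?_⟩
  rw [AddUnits.val_add, ← add_assoc, add_right_comm, hxy]

theorem AddMonoidHom.surjective_comp_subtype {M Q : Type*} [AddCommMonoid M] [AddCommMonoid Q]
    (π : M →+ Q) {ι : Type*} {w : ι → M} (hw : AddSubmonoid.closure (Set.range (π ∘ w)) = ⊤)
    {P : AddSubmonoid M} (hP : Set.range w ⊆ P) : Surjective (π.comp P.subtype) := by
  rw [← AddMonoidHom.mrange_eq_top, AddMonoidHom.mrange_comp, AddSubmonoid.mrange_subtype,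
    eq_top_iff, ← hw, Set.range_comp, ← AddMonoidHom.map_mclosure]
  exact AddSubmonoid.monotone_map (AddSubmonoid.closure_le.mpr hP)

/-- Let `M` be a commutative monoid (written additively) and `G ⊆ M`
the submonoid of invertible elements.  If the translation action of `G` on `M` is
free and the quotient monoid `M/G` (the quotient of `M` by the congruence generated
by the pairs `(g, 0)` for `g ∈ G`) is finitely generated, then there is a finitely
generated submonoid `P ⊆ M` such that the composite `P ↪ M → M/G` is surjective and
the induced homomorphism `P/(P ∩ G) → M/G` is an isomorphism. -/
theorem exists_fg_submonoid_chart {M : Type u} [AddCommMonoid M]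
    (G : AddSubmonoid M) (hG : ∀ m : M, m ∈ G ↔ IsAddUnit m)
    (hfree : ∀ g ∈ G, ∀ m : M, g + m = m → g = 0)
    (hfg : AddMonoid.FG (addConGen (fun x y : M => x ∈ G ∧ y = 0)).Quotient) :
    ∃ P : AddSubmonoid M, P.FG ∧
      Function.Surjective
        ((addConGen (fun x y : M => x ∈ G ∧ y = 0)).mk'.comp P.subtype) ∧
      ∃ h : addConGen (fun x y : ↥P => (x : M) ∈ G ∧ y = 0) ≤
          AddCon.ker ((addConGen (fun x y : M => x ∈ G ∧ y = 0)).mk'.comp P.subtype),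
        Function.Bijective
          ((addConGen (fun x y : ↥P => (x : M) ∈ G ∧ y = 0)).lift
            ((addConGen (fun x y : M => x ∈ G ∧ y = 0)).mk'.comp P.subtype) h) := by
  have hfree_units (u : AddUnits M) (m : M) (h : (u : M) + m = m) : u = 0 :=
    AddUnits.ext (hfree u ((hG u).mpr u.isAddUnit) m h)
  obtain ⟨Q, hQ, hQfin⟩ := AddMonoid.fg_iff.mp hfg
  have := hQfin.fintype
  let w : Q → M := surjInv G.quotientCon.mk'_surjective ∘ Subtype.val
  have hw : AddSubmonoid.closure (range (G.quotientCon.mk' ∘ w)) = ⊤ := by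
    rw [show G.quotientCon.mk' ∘ w = Subtype.val from funext fun q => surjInv_eq _ q.1,
      Subtype.range_coe, hQ]
  obtain ⟨U, hUfg, hU⟩ := exists_fg_addSubgroup_mem_of_sum_add_eq_sum hfree_units w
  let H := U.toAddSubmonoid.map (AddUnits.coeHom M)
  have hHG : H ≤ G := by
    rintro _ ⟨v, -, rfl⟩
    exact (hG v).mpr v.isAddUnit
  let P := AddSubmonoid.closure (range w) ⊔ H
  have hHP : H ≤ G ⊓ P := le_inf hHG le_sup_right
  have hsurj := G.quotientCon.mk'.surjective_comp_subtype hw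
    (AddSubmonoid.subset_closure.trans (le_sup_left : _ ≤ P))
  refine ⟨P, ((AddSubmonoid.fg_iff _).mpr ⟨_, rfl, finite_range w⟩).sup
    (((AddSubgroup.fg_iff_addSubmonoid_fg U).mp hUfg).map _), hsurj,
    G.exists_bijective_quotientCon_lift P hsurj fun x hx y hy hxy => ?_⟩
  obtain ⟨u, hu⟩ := (AddSubmonoid.quotientCon_iff_of_forall_isAddUnit hG).mp hxy
  obtain ⟨v, hv, v', hv', h⟩ := exists_add_eq_add_of_mem_closure_range_sup hU hx hy hu
  exact ⟨v, hHP ⟨v, hv, rfl⟩, v', hHP ⟨v', hv', rfl⟩, h⟩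
end

section
/- Let j : P → Q, f : P → A, g : Q → B, h : A → B be homomorphisms of commutative monoids (written additively) with h ∘ f = g ∘ j. Assume that for every q ∈ Q there exists a positive integer m such that m•q lies in the image of j, that h is injective, and that B is sharp, i.e., 0 is the only invertible element of B. Then the kernel of g is g⁻¹(0) = {q ∈ Q : there exist a positive integer m and an element k ∈ f⁻¹(0) with m•q = j(k)}. -/
/-! Some multiple `m • q` is `j k`, and `g ∘ j = h ∘ f` with `h` injective gives
`g (j k) = 0 ↔ f k = 0`. For the converse, `m • g q = 0` with `m > 0` makes `g q` an
additive unit, hence zero since `B` is sharp. -/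

theorem eq_zero_of_nsmul_eq_zero_of_sharp {M : Type*} [AddMonoid M]
    (hsharp : ∀ a : M, IsAddUnit a → a = 0) {m : ℕ} (hm : m ≠ 0) {a : M}
    (ha : m • a = 0) : a = 0 :=
  hsharp a (IsAddUnit.of_nsmul_eq_zero ha hm)

theorem AddMonoidHom.map_eq_zero_iff_of_comp_eq {P Q A B : Type*} [AddZeroClass P]
    [AddZeroClass Q] [AddZeroClass A] [AddZeroClass B] {j : P →+ Q} {f : P →+ A}
    {g : Q →+ B} {h : A →+ B} (hcomm : h.comp f = g.comp j) (hinj : Function.Injective h)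
    (k : P) : f k = 0 ↔ g (j k) = 0 := by
  rw [← map_eq_zero_iff h hinj, ← AddMonoidHom.comp_apply, hcomm, AddMonoidHom.comp_apply]

/-- Let `j : P → Q`, `f : P → A`, `g : Q → B`, `h : A → B` be
homomorphisms of commutative monoids (written additively) with `h ∘ f = g ∘ j`.
Assume that for every `q ∈ Q` some positive multiple of `q` lies in the image of
`j`, that `h` is injective, and that `B` is sharp (its only invertible element is
`0`).  Then `g⁻¹(0) = {q : ∃ m > 0, ∃ k ∈ f⁻¹(0), m • q = j k}`. -/
theorem kernel_of_chart_for_system_of_denominators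
    {P Q A B : Type u} [AddCommMonoid P] [AddCommMonoid Q] [AddCommMonoid A]
    [AddCommMonoid B] (j : P →+ Q) (f : P →+ A) (g : Q →+ B) (h : A →+ B)
    (hcomm : h.comp f = g.comp j)
    (hkum : ∀ q : Q, ∃ m : ℕ, 0 < m ∧ m • q ∈ Set.range j)
    (hinj : Function.Injective h)
    (hsharp : ∀ b : B, IsAddUnit b → b = 0) :
    ∀ q : Q, g q = 0 ↔ ∃ (m : ℕ) (k : P), 0 < m ∧ f k = 0 ∧ m • q = j k := by
  have hker := AddMonoidHom.map_eq_zero_iff_of_comp_eq hcomm hinj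
  intro q
  constructor
  · intro hq
    obtain ⟨m, hm, k, hk⟩ := hkum q
    refine ⟨m, k, hm, (hker k).2 ?_, hk.symm⟩
    rw [hk, map_nsmul, hq, nsmul_zero]
  · rintro ⟨m, k, hm, hfk, hmq⟩
    refine eq_zero_of_nsmul_eq_zero_of_sharp hsharp hm.ne' ?_
    rw [← map_nsmul, hmq, ← hker k, hfk]
end
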